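/- arXiv:2009.12680 — 6 statements merged into one kernel-verified Lean document; each statement's English description precedes it below -/
import Mathlib

section
/- Take two disjoint cycles in a permutation, one containing elements u1 and w1 (with u1 mapping to w1) and the other containing u2 and w2 (with u2 mapping to w2). Replacing the maps u1 ↦ w1 and u2 ↦ w2 by u1 ↦ w2 and u2 ↦ w1 merges the two cycles into a single cycle, and the parity of the number of even-length cycles changes by exactly one: if both original cycle lengths had the same parity the even-cycle count changes by ±1, and if they had different parity it decreases by 1; in all cases (-1)^{ec} flips sign. -/
/-!
`(-1) ^ ec(π)` is the sign of `π`, since a cycle of length `n` has sign `-(-1) ^ n`. The new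
permutation is `swap w1 w2 * π`, so its sign is the opposite one. It joins `u1` to `u2`: it sends
`u1` to `w2` and then follows `π` from `w2` until it first reaches `u2`. No point on that path is
`u1`, so `swap w1 w2` does not change `π` there.
-/

def evenCycles {α : Type*} [Fintype α] [DecidableEq α] (π : Equiv.Perm α) : ℕ :=
  (π.cycleType.filter fun l => Even l).card

open Equiv Perm

theorem Multiset.neg_one_pow_card_filter_even (s : Multiset ℕ) :
    (-1 : ℤˣ) ^ (s.filter Even).card = (s.map fun n => -(-1 : ℤˣ) ^ n).prod := by
  induction s using Multiset.induction_on with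
  | empty => rfl
  | cons a s ih =>
    by_cases ha : Even a
    · simp [Multiset.filter_cons_of_pos _ ha, ih, ha.neg_one_pow, pow_succ, mul_comm]
    · simp [Multiset.filter_cons_of_neg _ ha, ih, (Nat.not_even_iff_odd.mp ha).neg_one_pow]

theorem neg_one_pow_evenCycles_eq_sign {α : Type*} [Fintype α] [DecidableEq α] (π : Perm α) :
    (-1 : ℤ) ^ evenCycles π = sign π := by
  rw [evenCycles, sign_of_cycleType', ← Multiset.neg_one_pow_card_filter_even]
  push_cast
  rfl

theorem Equiv.Perm.SameCycle.of_eqOn_cycle {α : Type*} [Finite α] {σ τ : Perm α} {x y : α}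
    (h : τ.SameCycle x y) (hagree : ∀ z, τ.SameCycle x z → z ≠ y → σ z = τ z) :
    σ.SameCycle x y := by
  classical
  have hex := h.exists_nat_pow_eq
  -- Before its first visit to `y`, the `τ`-orbit of `x` only meets points where `σ = τ`.
  have hpath : ∀ i ≤ Nat.find hex, (σ ^ i) x = (τ ^ i) x := by
    intro i hi
    induction i with
    | zero => rfl
    | succ i ih =>
      rw [pow_succ', mul_apply, ih (by omega), pow_succ', mul_apply,
        hagree _ (sameCycle_pow_right.2 (SameCycle.refl τ x)) (Nat.find_min hex (by omega))]
  exact ⟨Nat.find hex, by rw [zpow_natCast, hpath _ le_rfl, Nat.find_spec hex]⟩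

/-- If `u1 ↦ w1` and `u2 ↦ w2` lie in two distinct cycles of `π`, then replacing these maps by
`u1 ↦ w2`, `u2 ↦ w1` (i.e. passing to `swap w1 w2 * π`) merges the two cycles into a single
cycle and flips the sign `(-1)^{ec}`. -/
theorem merge_cycles_flips_even_cycle_sign {α : Type*} [Fintype α] [DecidableEq α]
    (π : Equiv.Perm α) (u1 u2 w1 w2 : α)
    (h1 : π u1 = w1) (h2 : π u2 = w2) (hdiff : ¬ π.SameCycle u1 u2) :
    (Equiv.swap w1 w2 * π).SameCycle u1 u2 ∧
      (-1 : ℤ) ^ evenCycles (Equiv.swap w1 w2 * π) = -(-1 : ℤ) ^ evenCycles π := by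
  have hw : w1 ≠ w2 := by
    rintro rfl
    exact hdiff (by rw [π.injective (h1.trans h2.symm)])
  have hw2u2 : π.SameCycle w2 u2 := ⟨-1, by simp [← h2]⟩
  refine ⟨?_, ?_⟩
  · have hu1 : (swap w1 w2 * π).SameCycle u1 w2 := ⟨1, by simp [h1]⟩
    refine hu1.trans (hw2u2.of_eqOn_cycle fun z hz hzu ↦ swap_apply_of_ne_of_ne ?_ ?_)
    · rw [← h1]
      refine π.injective.ne ?_
      rintro rfl
      exact hdiff (hz.symm.trans hw2u2)
    · rw [← h2]
      exact π.injective.ne hzu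
  · rw [neg_one_pow_evenCycles_eq_sign, neg_one_pow_evenCycles_eq_sign, map_mul, sign_swap hw]
    push_cast
    ring
end

section
/- Let G be a finite graph, u1 a source and u2 a sink, and w1 a monovalent (degree-1) vertex distinct from u1 and u2, with unique neighbor w2. Then the transpedance [u1 u2, w1 w2], defined as the signed ordered second cofactor of the Laplacian, equals 0. -/
/-- The transpedance `[u1 u2, w1 w2]`: the signed ordered second cofactor of `M`,
i.e. the positionally signed cofactor of the `(u2,w2)`-entry of the positionally signed
`(u1,w1)`-minor, expressed by the standard permutation-sum identity for second cofactors. -/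
def transp {n : ℕ} (M : Matrix (Fin n) (Fin n) ℤ) (u1 u2 w1 w2 : Fin n) : ℤ :=
  ∑ σ ∈ Finset.univ.filter (fun σ : Equiv.Perm (Fin n) => σ u1 = w1 ∧ σ u2 = w2),
    ((Equiv.Perm.sign σ : ℤˣ) : ℤ) *
      ∏ i ∈ Finset.univ.filter (fun i : Fin n => i ≠ u1 ∧ i ≠ u2), M i (σ i)

/-!
Every permutation `σ` in the expansion of `[u1 u2, w1 w2]` sends `u1 ↦ w1` and `u2 ↦ w2`,
so `σ w1` is neither `w1` nor `w2`, while row `w1` is a factor of the product since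
`w1 ∉ {u1, u2}`. In the Laplacian, row `w1` of a monovalent vertex is supported on
`{w1, w2}`, so every term of the expansion vanishes.
-/

namespace SimpleGraph

variable {V : Type*} [Fintype V] [DecidableEq V] {G : SimpleGraph V} [DecidableRel G.Adj]

theorem lapMatrix_apply_of_ne_of_not_adj (R : Type*) [AddGroupWithOne R] {i j : V}
    (hij : i ≠ j) (h : ¬G.Adj i j) : G.lapMatrix R i j = 0 := by
  simp [lapMatrix, degMatrix, adjMatrix, hij, h]

theorem lapMatrix_apply_eq_zero_of_degree_eq_one (R : Type*) [AddGroupWithOne R] {v w x : V}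
    (hdeg : G.degree v = 1) (hadj : G.Adj v w) (hxv : x ≠ v) (hxw : x ≠ w) :
    G.lapMatrix R v x = 0 := by
  obtain ⟨w', -, hunique⟩ := degree_eq_one_iff_existsUnique_adj.mp hdeg
  refine lapMatrix_apply_of_ne_of_not_adj R hxv.symm fun hvx => hxw ?_
  rw [hunique x hvx, hunique w hadj]

end SimpleGraph

theorem transp_eq_zero_of_row_support {n : ℕ} (M : Matrix (Fin n) (Fin n) ℤ)
    {u1 u2 w1 w2 : Fin n} (h1 : w1 ≠ u1) (h2 : w1 ≠ u2)
    (hrow : ∀ j, j ≠ w1 → j ≠ w2 → M w1 j = 0) : transp M u1 u2 w1 w2 = 0 := by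
  refine Finset.sum_eq_zero fun σ hσ => mul_eq_zero_of_right _ ?_
  obtain ⟨hσ1, hσ2⟩ := (Finset.mem_filter.mp hσ).2
  refine Finset.prod_eq_zero (i := w1) (by simp [h1, h2]) (hrow _ ?_ ?_)
  · exact fun h => h1 (σ.injective (h.trans hσ1.symm))
  · exact fun h => h2 (σ.injective (h.trans hσ2.symm))

theorem monovalent_transpedance_zero_general {n : ℕ} (G : SimpleGraph (Fin n))
    [DecidableRel G.Adj] (u1 u2 w1 w2 : Fin n)
    (hdeg : G.degree w1 = 1) (h1 : w1 ≠ u1) (h2 : w1 ≠ u2) (hadj : G.Adj w1 w2) :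
    transp (G.lapMatrix ℤ) u1 u2 w1 w2 = 0 :=
  transp_eq_zero_of_row_support _ h1 h2 fun _ =>
    SimpleGraph.lapMatrix_apply_eq_zero_of_degree_eq_one ℤ hdeg hadj

/-- If `w1` is a monovalent vertex distinct from the source `u1` and sink `u2`, with unique
neighbor `w2`, then the transpedance `[u1 u2, w1 w2]` vanishes. -/
theorem monovalent_transpedance_zero {n : ℕ} (G : SimpleGraph (Fin n))
    [DecidableRel G.Adj] (hG : G.Connected) (u1 u2 w1 w2 : Fin n)
    (hdeg : G.degree w1 = 1) (h1 : w1 ≠ u1) (h2 : w1 ≠ u2) (hadj : G.Adj w1 w2) :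
    transp (G.lapMatrix ℤ) u1 u2 w1 w2 = 0 :=
  monovalent_transpedance_zero_general G u1 u2 w1 w2 hdeg h1 h2 hadj
end

section
/- Let G be a bidirected graph (orientation of a signed graph) in which every edge is introverted or extroverted (equivalently, every adjacency is negative). Then the permanent of the Laplacian L = H·Hᵀ equals the total number of contributors of G: perm(L) = |𝔠(G)|. -/
open Matrix

/-- The incidence matrix of a bidirected graph: each edge `e` has endpoints `v1 e ≠ v2 e`
with incidence signs `s1 e`, `s2 e ∈ {±1}`. -/
def incMat {V E : Type*} [DecidableEq V] (v1 v2 : E → V) (s1 s2 : E → ℤ) : Matrix V E ℤ :=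
  Matrix.of fun v e => (if v1 e = v then s1 e else 0) + (if v2 e = v then s2 e else 0)

/-- A contributor: each vertex `v` is assigned a step consisting of an edge `(c v).1` together
with an entry incidence (chosen by `(c v).2.1`) located at `v` and an exit incidence (chosen by
`(c v).2.2`) of the same edge; the head of the step at `v` is the endpoint of the exit
incidence (equal to `v` for a backstep), and the heads must cover the vertices bijectively. -/
def IsContributor {V E : Type*} (v1 v2 : E → V) (c : V → E × Bool × Bool) : Prop :=
  (∀ v, (if (c v).2.1 then v1 (c v).1 else v2 (c v).1) = v) ∧
    Function.Bijective fun v => if (c v).2.2 then v1 (c v).1 else v2 (c v).1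

/-!
Expanding `perm (H Hᵀ) = ∑_σ ∏_v ∑_e H_{σ v, e} H_{v, e}` turns the permanent into a sum over
pairs `(σ, f)` of a permutation and an edge choice. When both incidences of every edge carry the
same sign `±1`, each factor `H_{σ v, e} H_{v, e}` is `1` if `e` meets both `v` and `σ v`, and `0`
otherwise: no sign survives. So the permanent counts the pairs in which `f v` joins `v` to `σ v`,
and these are exactly the contributors, a step being recovered from its edge by recording which
endpoint is its tail and which is its head (loopless edges make this choice unique).
-/

theorem Matrix.permanent_mul_transpose {V E R : Type*} [Fintype V] [DecidableEq V] [Fintype E]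
    [CommSemiring R] (A B : Matrix V E R) :
    (A * Bᵀ).permanent = ∑ σ : Equiv.Perm V, ∑ f : V → E, ∏ v, A (σ v) (f v) * B v (f v) := by
  simp only [permanent, mul_apply, transpose_apply, Finset.prod_univ_sum, Fintype.piFinset_univ]

section Bidirected

variable {V E : Type*} (v1 v2 : E → V)

def EdgesRealize (σ : Equiv.Perm V) (f : V → E) : Prop :=
  ∀ v, (v1 (f v) = σ v ∨ v2 (f v) = σ v) ∧ (v1 (f v) = v ∨ v2 (f v) = v)

variable {v1 v2} [DecidableEq V]

theorem incMat_apply_of_signs_eq {s1 s2 : E → ℤ} (hloop : ∀ e, v1 e ≠ v2 e)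
    (hs : ∀ e, s1 e = s2 e) (v : V) (e : E) :
    incMat v1 v2 s1 s2 v e = if v1 e = v ∨ v2 e = v then s1 e else 0 := by
  by_cases h1 : v1 e = v <;> by_cases h2 : v2 e = v
  · exact absurd (h1.trans h2.symm) (hloop e)
  all_goals simp [incMat, h1, h2, hs e]

theorem incMat_mul_incMat_apply {s1 s2 : E → ℤ} (hs1 : ∀ e, s1 e = 1 ∨ s1 e = -1)
    (hloop : ∀ e, v1 e ≠ v2 e) (hs : ∀ e, s1 e = s2 e) (u v : V) (e : E) :
    incMat v1 v2 s1 s2 u e * incMat v1 v2 s1 s2 v e =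
      if (v1 e = u ∨ v2 e = u) ∧ (v1 e = v ∨ v2 e = v) then 1 else 0 := by
  have hsq : s1 e * s1 e = 1 := by rcases hs1 e with h | h <;> simp [h]
  simp only [incMat_apply_of_signs_eq hloop hs]
  split_ifs <;> simp_all

theorem ite_eq_self_of_incident {e : E} {x : V} (h : v1 e = x ∨ v2 e = x) :
    (if v1 e = x then v1 e else v2 e) = x := by
  split_ifs with h1
  · exact h1
  · exact h.resolve_left h1

theorem decide_eq_ite_of_ne {e : E} (hne : v1 e ≠ v2 e) (b : Bool) :
    decide (v1 e = if b then v1 e else v2 e) = b := by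
  cases b <;> simp [hne]

noncomputable def contributorEquivEdgesRealize (hloop : ∀ e, v1 e ≠ v2 e) :
    {c : V → E × Bool × Bool // IsContributor v1 v2 c} ≃
      {p : Equiv.Perm V × (V → E) // EdgesRealize v1 v2 p.1 p.2} where
  toFun c := ⟨(Equiv.ofBijective _ c.2.2, fun v => (c.1 v).1), fun v => by
    constructor
    · simp only [Equiv.ofBijective_apply]
      split_ifs <;> simp
    · have h := c.2.1 v
      split_ifs at h <;> simp [h]⟩
  invFun p := ⟨fun v => (p.1.2 v, decide (v1 (p.1.2 v) = v), decide (v1 (p.1.2 v) = p.1.1 v)),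
    fun v => by simpa using ite_eq_self_of_incident (p.2 v).2,
    by
      have heads : (fun v => if decide (v1 (p.1.2 v) = p.1.1 v) then v1 (p.1.2 v) else v2 (p.1.2 v))
          = p.1.1 := funext fun v => by simpa using ite_eq_self_of_incident (p.2 v).1
      simpa only [heads] using p.1.1.bijective⟩
  left_inv := by
    rintro ⟨c, hc⟩
    ext v : 2
    refine Prod.ext rfl (Prod.ext ?_ ?_)
    · have h := decide_eq_ite_of_ne (hloop (c v).1) (c v).2.1
      rwa [hc.1 v] at h
    · exact decide_eq_ite_of_ne (hloop _) _
  right_inv := by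
    rintro ⟨⟨σ, f⟩, hp⟩
    ext v : 4
    · simpa using ite_eq_self_of_incident (hp v).1
    · rfl

end Bidirected

theorem permanent_laplacian_eq_card_contributors_general {V E : Type*} [Fintype V] [Fintype E]
    [DecidableEq V] (v1 v2 : E → V) (s1 s2 : E → ℤ)
    (hs1 : ∀ e, s1 e = 1 ∨ s1 e = -1)
    (hloop : ∀ e, v1 e ≠ v2 e)
    (hintroext : ∀ e, s1 e = s2 e) :
    Matrix.permanent (incMat v1 v2 s1 s2 * (incMat v1 v2 s1 s2)ᵀ) =
      Nat.card {c : V → E × Bool × Bool // IsContributor v1 v2 c} := by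
  classical
  rw [Nat.card_congr (contributorEquivEdgesRealize hloop), Nat.card_eq_fintype_card,
    Fintype.card_subtype, Matrix.permanent_mul_transpose]
  simp only [incMat_mul_incMat_apply hs1 hloop hintroext, Finset.prod_boole, Finset.mem_univ,
    true_implies]
  rw [← Fintype.sum_prod_type', Finset.sum_boole]
  unfold EdgesRealize
  congr

/-- For a bidirected graph with no isolated vertices in which every edge is introverted or
extroverted (equivalently, every adjacency is negative), the permanent of the Laplacian
`L = H·Hᵀ` equals the number of contributors. -/
theorem permanent_laplacian_eq_card_contributors {V E : Type*} [Fintype V] [Fintype E]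
    [DecidableEq V] (v1 v2 : E → V) (s1 s2 : E → ℤ)
    (hs1 : ∀ e, s1 e = 1 ∨ s1 e = -1) (hs2 : ∀ e, s2 e = 1 ∨ s2 e = -1)
    (hloop : ∀ e, v1 e ≠ v2 e)
    (hiso : ∀ v, ∃ e, v1 e = v ∨ v2 e = v)
    (hintroext : ∀ e, s1 e = s2 e) :
    Matrix.permanent (incMat v1 v2 s1 s2 * (incMat v1 v2 s1 s2)ᵀ) =
      Nat.card {c : V → E × Bool × Bool // IsContributor v1 v2 c} :=
  permanent_laplacian_eq_card_contributors_general v1 v2 s1 s2 hs1 hloop hintroext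
end

section
/- Let G be a signed graph in which every adjacency is negative, and let c, c' be contributors where c' is obtained from c by packing one cycle of length ℓ into ℓ backsteps. Define the permanental sign sgn_P(x) = (-1)^{nc(x) + bs(x)}, where nc counts negative components and bs counts backsteps. Then sgn_P(c) = sgn_P(c'); in particular, all contributors of G have the same permanental sign (-1)^{|V|}, and the sum of sgn_P over all contributors equals (-1)^{|V|} times the number of contributors. -/
/-!
Only the parity of `nc + bs` matters. An odd cycle contributes `1` to `nc` and an odd number of
vertices, an even cycle nothing and an even number, so `nc c ≡ (cyc c).sum` and hence
`nc c + bs c ≡ n (mod 2)` for every contributor. Packing a cycle of length `ℓ` changes `nc` by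
`[ℓ odd] ≡ ℓ` and `bs` by `ℓ`, so it changes the exponent by an even number.
-/

section NegOnePow

variable {R : Type*} [Monoid R] [HasDistribNeg R]

theorem neg_one_pow_ite_odd (ℓ : ℕ) : (-1 : R) ^ (if Odd ℓ then 1 else 0) = (-1) ^ ℓ := by
  split_ifs with h
  · rw [pow_one, h.neg_one_pow]
  · rw [pow_zero, (Nat.not_odd_iff_even.mp h).neg_one_pow]

theorem Multiset.neg_one_pow_card_filter_odd (s : Multiset ℕ) :
    (-1 : R) ^ (s.filter Odd).card = (-1) ^ s.sum := by
  induction s using Multiset.induction with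
  | empty => simp
  | cons a s ih =>
    rcases Nat.even_or_odd a with ha | ha
    · rw [Multiset.filter_cons_of_neg _ (Nat.not_odd_iff_even.mpr ha), Multiset.sum_cons,
        pow_add, ha.neg_one_pow, one_mul, ih]
    · rw [Multiset.filter_cons_of_pos _ ha, Multiset.card_cons, Multiset.sum_cons, pow_succ',
        pow_add, ha.neg_one_pow, ih]

end NegOnePow

/-- In a signed graph all of whose adjacencies are negative (so a cycle of length `ℓ` is
negative exactly when `ℓ` is odd), consider contributors `c` on a vertex set of size `n`,
each consisting of a multiset `cyc c` of cycle lengths and `bs c` backsteps covering the `n`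
vertices, with `nc c` the number of negative (odd-length) cycle components. Then:
packing a cycle of length `ℓ` into `ℓ` backsteps preserves the permanental sign
`sgn_P = (-1)^(nc + bs)`; every contributor has permanental sign `(-1)^n`; and the sum of the
permanental signs over all contributors is `(-1)^n` times the number of contributors. -/
theorem permanental_sign_constant (n : ℕ) (C : Type*) [Fintype C]
    (cyc : C → Multiset ℕ) (bs nc : C → ℕ)
    (hcover : ∀ c, (cyc c).sum + bs c = n)
    (hnc : ∀ c, nc c = ((cyc c).filter fun l => Odd l).card) :
    (∀ ℓ ncc bsc : ℕ, 0 < ℓ →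
        (-1 : ℤ) ^ ((ncc + if Odd ℓ then 1 else 0) + bsc) = (-1 : ℤ) ^ (ncc + (bsc + ℓ))) ∧
    (∀ c : C, (-1 : ℤ) ^ (nc c + bs c) = (-1 : ℤ) ^ n) ∧
    ∑ c : C, (-1 : ℤ) ^ (nc c + bs c) = (-1 : ℤ) ^ n * Fintype.card C := by
  have sign_eq : ∀ c : C, (-1 : ℤ) ^ (nc c + bs c) = (-1 : ℤ) ^ n := fun c => by
    rw [← hcover c, hnc c, pow_add, pow_add, Multiset.neg_one_pow_card_filter_odd]
  refine ⟨fun ℓ ncc bsc _ => ?_, sign_eq, ?_⟩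
  · rw [pow_add, pow_add, pow_add, pow_add, neg_one_pow_ite_odd]
    ring
  · simp only [sign_eq, Finset.sum_const, Finset.card_univ, nsmul_eq_mul, mul_comm]
end

section
/- Let M be an n×n integer matrix and X = (x_{ij}) an n×n matrix of indeterminates. For any pair of ordered index tuples u = (u1, u2), w = (w1, w2) with u1 ≠ u2 and w1 ≠ w2, the coefficient of x_{u1 w1}·x_{u2 w2} in det(X - M) equals (-1)^{n-2} times the signed ordered second cofactor of M obtained by deleting rows u1, u2 and columns w1, w2 with the appropriate positional signs (i.e., (-1)^{pos(u1)+pos(w1)} times (-1)^{pos'(u2)+pos'(w2)} times det of the remaining (n-2)×(n-2) submatrix of M). -/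
/-!
In the Leibniz expansion of `det (X - M)`, the term of a permutation `σ` is the product
`∏ j, (x_{σ j, j} - M_{σ j, j})` over pairwise distinct variables. Its coefficient of
`x_{u₁w₁} x_{u₂w₂}` vanishes unless `σ w₁ = u₁` and `σ w₂ = u₂`, and is then
`∏_{j ≠ w₁, w₂} (-M_{σ j, j})`. Summing over `σ`, the coefficient is the determinant of `-M` with
rows `u₁, u₂` replaced by the unit rows `e_{w₁}, e_{w₂}`. Two Laplace expansions along these rows
leave the `m × m` minor of `-M`, whose determinant is `(-1)^m` times that of the minor of `M`.
-/

/-- The position of index `b` in the minor obtained by deleting row/column `a`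
(meaningful whenever `b ≠ a`). -/
def posAfter {m : ℕ} (a b : Fin (m + 2)) : Fin (m + 1) :=
  if a.val < b.val then ⟨b.val - 1, by have := b.isLt; omega⟩
  else ⟨min b.val m, by omega⟩

namespace MvPolynomial

variable {R σ ι : Type*} [CommSemiring R] [Fintype ι] [DecidableEq ι]

theorem prod_X_add_C_eq_sum_monomial (p : ι → σ) (c : ι → R) :
    ∏ i, (X (p i) + C (c i)) =
      ∑ s : Finset ι, monomial (∑ i ∈ s, Finsupp.single (p i) 1) (∏ i ∈ sᶜ, c i) := by
  simp_rw [Fintype.prod_add, monomial_sum_index, ← map_prod, mul_comm (C _)]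
  rfl

variable [DecidableEq σ]

theorem coeff_sum_single_prod_X_add_C {p : ι → σ} (hp : p.Injective) (c : ι → R)
    (t : Finset ι) :
    coeff (∑ i ∈ t, Finsupp.single (p i) 1) (∏ i, (X (p i) + C (c i))) = ∏ i ∈ tᶜ, c i := by
  have mem_iff (s : Finset ι) (i : ι) : i ∈ s ↔ (∑ j ∈ s, Finsupp.single (p j) 1) (p i) ≠ 0 := by
    simp [Finsupp.finsetSum_apply, Finsupp.single_apply, hp.eq_iff]
  rw [prod_X_add_C_eq_sum_monomial, coeff_sum, Finset.sum_eq_single t]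
  · rw [coeff_monomial, if_pos rfl]
  · intro s _ hst
    rw [coeff_monomial, if_neg]
    intro h
    refine hst (Finset.ext fun i => ?_)
    rw [mem_iff, mem_iff, h]
  · simp

theorem coeff_prod_X_add_C_eq_zero (p : ι → σ) (c : ι → R) {d : σ →₀ ℕ} {a : σ}
    (ha : a ∈ d.support) (hp : a ∉ Set.range p) :
    coeff d (∏ i, (X (p i) + C (c i))) = 0 := by
  rw [prod_X_add_C_eq_sum_monomial, coeff_sum]
  refine Finset.sum_eq_zero fun s _ => ?_
  rw [coeff_monomial, if_neg]
  intro h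
  refine Finsupp.mem_support_iff.1 ha ?_
  rw [← h, Finsupp.finsetSum_apply]
  exact Finset.sum_eq_zero fun i _ => Finsupp.single_eq_of_ne (fun h => hp ⟨i, h.symm⟩)

end MvPolynomial

open MvPolynomial

theorem Pi.single_comp_of_injective {ι κ M : Type*} [DecidableEq ι] [DecidableEq κ] [Zero M]
    {f : κ → ι} (hf : f.Injective) (k : κ) (x : M) :
    Pi.single (f k) x ∘ f = Pi.single k x := by
  ext j
  simp [Pi.single_apply, hf.eq_iff]

theorem Fin.succAbove_posAfter {m : ℕ} {a b : Fin (m + 2)} (h : b ≠ a) :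
    a.succAbove (posAfter a b) = b := by
  have hne : b.val ≠ a.val := Fin.val_ne_of_ne h
  unfold posAfter
  split_ifs with hab
  · rw [Fin.succAbove_of_le_castSucc _ _ (by rw [Fin.le_def]; simp; omega)]
    ext; simp; omega
  · rw [Fin.succAbove_of_castSucc_lt _ _ (by rw [Fin.lt_def]; simp; omega)]
    ext; simp; omega

namespace Matrix

variable {n R : Type*} [Fintype n] [DecidableEq n] [CommRing R]

theorem prod_perm_eq_zero_of_row_eq_single {A : Matrix n n R} {u w : n}
    (hA : A u = Pi.single w 1) {σ : Equiv.Perm n} (hσ : σ w ≠ u) : ∏ j, A (σ j) j = 0 := by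
  refine Finset.prod_eq_zero (Finset.mem_univ (σ.symm u)) ?_
  rw [σ.apply_symm_apply, hA, Pi.single_eq_of_ne]
  rintro rfl
  exact hσ (σ.apply_symm_apply u)

theorem coeff_prod_perm_X_add_C (N : Matrix n n R) {u₁ u₂ w₁ w₂ : n} (hu : u₁ ≠ u₂)
    (hw : w₁ ≠ w₂) (σ : Equiv.Perm n) :
    coeff (Finsupp.single (u₁, w₁) 1 + Finsupp.single (u₂, w₂) 1)
        (∏ j, (X (σ j, j) + C (N (σ j) j))) =
      ∏ j, ((N.updateRow u₁ (Pi.single w₁ 1)).updateRow u₂ (Pi.single w₂ 1)) (σ j) j := by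
  set A := (N.updateRow u₁ (Pi.single w₁ 1)).updateRow u₂ (Pi.single w₂ 1) with hA
  set d := Finsupp.single (u₁, w₁) 1 + Finsupp.single (u₂, w₂) 1
  have hA₁ : A u₁ = Pi.single w₁ 1 := by rw [hA, updateRow_ne hu, updateRow_self]
  have hA₂ : A u₂ = Pi.single w₂ 1 := updateRow_self
  have vanish {u w : n} (hA : A u = Pi.single w 1) (hd : d (u, w) ≠ 0) (hσ : σ w ≠ u) :
      coeff d (∏ j, (X (σ j, j) + C (N (σ j) j))) = ∏ j, A (σ j) j := by
    rw [prod_perm_eq_zero_of_row_eq_single hA hσ]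
    refine coeff_prod_X_add_C_eq_zero _ _ (Finsupp.mem_support_iff.2 hd) ?_
    rintro ⟨j, hj⟩
    obtain ⟨rfl, rfl⟩ := Prod.ext_iff.1 hj
    exact hσ rfl
  by_cases hσ₁ : σ w₁ = u₁
  swap
  · exact vanish hA₁ (by simp [d]) hσ₁
  by_cases hσ₂ : σ w₂ = u₂
  swap
  · exact vanish hA₂ (by simp [d, hw]) hσ₂
  have hd : d = ∑ j ∈ {w₁, w₂}, Finsupp.single (σ j, j) 1 := by
    rw [Finset.sum_pair hw, hσ₁, hσ₂]
  rw [hd, coeff_sum_single_prod_X_add_C (fun _ _ h => congrArg Prod.snd h),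
    ← Finset.prod_compl_mul_prod {w₁, w₂}, Finset.prod_pair hw, hσ₁, hσ₂, hA₁, hA₂,
    Pi.single_eq_same, Pi.single_eq_same, mul_one, mul_one]
  refine Finset.prod_congr rfl fun j hj => ?_
  simp only [Finset.mem_compl, Finset.mem_insert, Finset.mem_singleton, not_or] at hj
  rw [hA, updateRow_ne (by rw [← hσ₂]; exact σ.injective.ne hj.2),
    updateRow_ne (by rw [← hσ₁]; exact σ.injective.ne hj.1)]

theorem coeff_det_of_X_add_map_C (N : Matrix n n R) {u₁ u₂ w₁ w₂ : n} (hu : u₁ ≠ u₂)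
    (hw : w₁ ≠ w₂) :
    coeff (Finsupp.single (u₁, w₁) 1 + Finsupp.single (u₂, w₂) 1)
        (of (fun i j => (X (i, j) : MvPolynomial (n × n) R)) + N.map C).det =
      ((N.updateRow u₁ (Pi.single w₁ 1)).updateRow u₂ (Pi.single w₂ 1)).det := by
  simp only [det_apply, coeff_sum, coeff_smul, add_apply, of_apply, map_apply,
    coeff_prod_perm_X_add_C N hu hw]

theorem det_updateRow_single_one {m : ℕ} (A : Matrix (Fin (m + 1)) (Fin (m + 1)) R)
    (i j : Fin (m + 1)) :
    (A.updateRow i (Pi.single j 1)).det =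
      (-1) ^ (i + j : ℕ) * (A.submatrix i.succAbove j.succAbove).det := by
  rw [← adjugate_apply, adjugate_fin_succ_eq_det_submatrix]

theorem submatrix_updateRow_of_injective {l m k o α : Type*} [DecidableEq l] [DecidableEq m]
    (A : Matrix m o α) {f : l → m} (hf : f.Injective) (g : k → o) (i : l) (v : o → α) :
    (A.updateRow (f i) v).submatrix f g = (A.submatrix f g).updateRow i (v ∘ g) := by
  ext r s
  by_cases hr : r = i
  · subst hr; simp
  · simp [updateRow_ne (hf.ne hr), updateRow_ne hr]

theorem det_updateRow_single_one_pair {m : ℕ} (N : Matrix (Fin (m + 2)) (Fin (m + 2)) R)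
    {u₁ u₂ w₁ w₂ : Fin (m + 2)} (hu : u₁ ≠ u₂) (hw : w₁ ≠ w₂) :
    ((N.updateRow u₁ (Pi.single w₁ 1)).updateRow u₂ (Pi.single w₂ 1)).det =
      (-1) ^ (u₁ + w₁ : ℕ) * ((-1) ^ ((posAfter u₁ u₂ : ℕ) + posAfter w₁ w₂) *
        (N.submatrix (u₁.succAbove ∘ (posAfter u₁ u₂).succAbove)
          (w₁.succAbove ∘ (posAfter w₁ w₂).succAbove)).det) := by
  conv_lhs => rw [← Fin.succAbove_posAfter hu.symm, ← Fin.succAbove_posAfter hw.symm]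
  rw [updateRow_comm _ (Fin.succAbove_ne _ _).symm, det_updateRow_single_one,
    submatrix_updateRow_of_injective _ Fin.succAbove_right_injective,
    Pi.single_comp_of_injective Fin.succAbove_right_injective, det_updateRow_single_one,
    submatrix_submatrix]

end Matrix

/-- The coefficient of `x_{u1 w1}·x_{u2 w2}` (with `u1 ≠ u2`, `w1 ≠ w2`) in the total minor
polynomial `det(X - M)` of an `n × n` integer matrix `M` (`n = m + 2`) equals `(-1)^{n-2}`
times the signed ordered second cofactor of `M`: the positional sign `(-1)^{u1+w1}` of
`(u1, w1)` in `M`, times the positional sign `(-1)^{pos'(u2)+pos'(w2)}` of `(u2, w2)` within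
the first minor, times the determinant of the submatrix of `M` with rows `u1, u2` and columns
`w1, w2` deleted. -/
theorem coeff_total_minor_eq_second_cofactor {m : ℕ}
    (M : Matrix (Fin (m + 2)) (Fin (m + 2)) ℤ) (u1 u2 w1 w2 : Fin (m + 2))
    (hu : u1 ≠ u2) (hw : w1 ≠ w2) :
    MvPolynomial.coeff
        (Finsupp.single (u1, w1) 1 + Finsupp.single (u2, w2) 1)
        (Matrix.det
          ((Matrix.of fun i j : Fin (m + 2) =>
              (MvPolynomial.X (i, j) : MvPolynomial (Fin (m + 2) × Fin (m + 2)) ℤ)) -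
            M.map MvPolynomial.C)) =
      (-1 : ℤ) ^ m *
        ((-1 : ℤ) ^ (u1.val + w1.val) *
          ((-1 : ℤ) ^ ((posAfter u1 u2).val + (posAfter w1 w2).val) *
            Matrix.det
              (M.submatrix (u1.succAbove ∘ (posAfter u1 u2).succAbove)
                (w1.succAbove ∘ (posAfter w1 w2).succAbove)))) := by
  rw [sub_eq_add_neg, ← Matrix.map_neg _ (map_neg C), Matrix.coeff_det_of_X_add_map_C _ hu hw,
    Matrix.det_updateRow_single_one_pair _ hu hw, Matrix.submatrix_neg, Pi.neg_apply,
    Pi.neg_apply, Matrix.det_neg, Fintype.card_fin]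
  ring
end

section
/- Let G be a finite connected graph, u1 a source and u2 a sink. For a vertex v with v ∉ {u1, u2}, the sum over incoming labeled flows equals the sum over outgoing labeled flows: ∑_{x ~ v} [u1 u2, x v] = ∑_{y ~ v} [u1 u2, v y], where [a b, c d] is the ordered second cofactor transpedance and both sums range over neighbors of v. -/
open Finset Matrix

section Transpedance

variable {n : ℕ} (M : Matrix (Fin n) (Fin n) ℤ)

theorem transp_comm (u1 u2 w1 w2 : Fin n) : transp M u1 u2 w1 w2 = transp M u2 u1 w2 w1 := by
  simp only [transp, and_comm]

theorem transp_self_of_ne (u : Fin n) {w1 w2 : Fin n} (hw : w1 ≠ w2) : transp M u u w1 w2 = 0 :=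
  sum_eq_zero fun _ hσ => absurd ((mem_filter.1 hσ).2.1.symm.trans (mem_filter.1 hσ).2.2) hw

theorem transp_eq_det_updateRow {u1 u2 : Fin n} (hu : u1 ≠ u2) (w1 w2 : Fin n) :
    transp M u1 u2 w1 w2 =
      ((M.updateRow u2 (Pi.single w2 1)).updateRow u1 (Pi.single w1 1)).det := by
  set N := (M.updateRow u2 (Pi.single w2 1)).updateRow u1 (Pi.single w1 1)
  have hprod (σ : Equiv.Perm (Fin n)) : ∏ i, N i (σ i) =
      if σ u1 = w1 ∧ σ u2 = w2 then ∏ i ∈ univ.filter (fun i => i ≠ u1 ∧ i ≠ u2), M i (σ i)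
      else 0 := by
    rw [← prod_filter_mul_prod_filter_not univ (fun i => i ≠ u1 ∧ i ≠ u2)]
    have hpair : univ.filter (fun i : Fin n => ¬(i ≠ u1 ∧ i ≠ u2)) = {u1, u2} := by
      ext i; simp [or_iff_not_imp_left]
    have hrest : ∏ i ∈ univ.filter (fun i => i ≠ u1 ∧ i ≠ u2), N i (σ i) =
        ∏ i ∈ univ.filter (fun i => i ≠ u1 ∧ i ≠ u2), M i (σ i) :=
      prod_congr rfl fun i hi => by
        obtain ⟨h1, h2⟩ := (mem_filter.1 hi).2
        simp only [N, updateRow_ne h1, updateRow_ne h2]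
    rw [hrest, hpair, prod_pair hu]
    simp only [N, updateRow_self, updateRow_ne hu.symm, Pi.single_apply, ite_and]
    split_ifs <;> simp
  rw [← det_transpose, det_apply', transp, sum_filter]
  refine sum_congr rfl fun σ _ => ?_
  simp only [transpose_apply, hprod]
  split_ifs <;> simp

theorem mulVec_transp_left_eq_zero {u1 u2 j : Fin n} (hu : u1 ≠ u2) (hj1 : j ≠ u1) (hj2 : j ≠ u2)
    (w2 : Fin n) : (M *ᵥ fun w => transp M u1 u2 w w2) j = 0 := by
  set N := M.updateRow u2 (Pi.single w2 1)
  have hNj : N j = M j := updateRow_ne hj2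
  calc (M *ᵥ fun w => transp M u1 u2 w w2) j
      = ∑ w, (N.updateRow u1 (M j w • Pi.single w 1)).det := by
        simp only [mulVec, dotProduct, transp_eq_det_updateRow M hu, det_updateRow_smul]
        rfl
    _ = (N.updateRow u1 (∑ w, M j w • Pi.single w 1)).det :=
        (detRowAlternating.map_update_sum univ u1 _ N).symm
    _ = (N.updateRow u1 (N j)).det := by
        rw [hNj, ← pi_eq_sum_univ']
    _ = 0 := det_updateRow_eq_zero hj1

theorem mulVec_transp_right_eq_zero {u1 u2 j : Fin n} (hu : u1 ≠ u2) (hj1 : j ≠ u1)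
    (hj2 : j ≠ u2) (w1 : Fin n) : (M *ᵥ fun w => transp M u1 u2 w1 w) j = 0 := by
  simpa only [transp_comm M u1 u2] using mulVec_transp_left_eq_zero M hu.symm hj2 hj1 w1

end Transpedance

theorem SimpleGraph.sum_neighborFinset_eq_degree_mul {V R : Type*} [Fintype V] [DecidableEq V]
    [NonAssocRing R] (G : SimpleGraph V) [DecidableRel G.Adj] {v : V} {f : V → R}
    (hf : (G.lapMatrix R *ᵥ f) v = 0) : ∑ x ∈ G.neighborFinset v, f x = G.degree v * f v := by
  rwa [lapMatrix_mulVec_apply, sub_eq_zero, eq_comm] at hf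

theorem transpedance_flow_conservation_general {n : ℕ} (G : SimpleGraph (Fin n))
    [DecidableRel G.Adj] (u1 u2 v : Fin n)
    (hv1 : v ≠ u1) (hv2 : v ≠ u2) :
    ∑ x ∈ G.neighborFinset v, transp (G.lapMatrix ℤ) u1 u2 x v =
      ∑ y ∈ G.neighborFinset v, transp (G.lapMatrix ℤ) u1 u2 v y := by
  rcases eq_or_ne u1 u2 with rfl | hu
  · have hne (x) (hx : x ∈ G.neighborFinset v) : x ≠ v := (G.mem_neighborFinset v x).1 hx |>.ne'
    rw [sum_eq_zero fun x hx => transp_self_of_ne _ u1 (hne x hx),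
      sum_eq_zero fun x hx => transp_self_of_ne _ u1 (hne x hx).symm]
  · rw [G.sum_neighborFinset_eq_degree_mul (mulVec_transp_left_eq_zero _ hu hv1 hv2 v),
      G.sum_neighborFinset_eq_degree_mul (mulVec_transp_right_eq_zero _ hu hv1 hv2 v)]

/-- Kirchhoff's vertex law at interior vertices: for a vertex `v` distinct from the source `u1`
and the sink `u2`, the sum of the incoming transpedances over the neighbors of `v` equals the
sum of the outgoing transpedances. -/
theorem transpedance_flow_conservation {n : ℕ} (G : SimpleGraph (Fin n))
    [DecidableRel G.Adj] (hG : G.Connected) (u1 u2 v : Fin n)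
    (hv1 : v ≠ u1) (hv2 : v ≠ u2) :
    ∑ x ∈ G.neighborFinset v, transp (G.lapMatrix ℤ) u1 u2 x v =
      ∑ y ∈ G.neighborFinset v, transp (G.lapMatrix ℤ) u1 u2 v y :=
  transpedance_flow_conservation_general G u1 u2 v hv1 hv2
end
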